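/- Let {q_k}_{k≥0} be a non-increasing sequence of positive reals and let p ∈ (0, 1]. For n ≥ 1 with binary decomposition n = 2^{n_1} + ⋯ + 2^{n_r}, n_1 > ⋯ > n_r ≥ 0, set n^{(0)} := n, n^{(j)} := n^{(j−1)} − 2^{n_j}, and F_{n,1} := (w_n/Q_n) Σ_{j=1}^{r} Q_{n^{(j−1)}} w_{2^{n_j}} D_{2^{n_j}}. Then there is a constant c_p such that for every N ∈ ℕ: ∫_{[0,1)\I_N} ( sup_{n>2^N} 2^{N/p} ∫_{I_N} |F_{n,1}(x ∔ t)| dt )^p dx ≤ c_p · 2^{N(1−p)} Q_{2^N}^{−p} Σ_{j=1}^{N} Q_{2^j}^{p} 2^{j(p−1)}. -/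

import Mathlib

open MeasureTheory Filter
open scoped ENNReal NNReal

noncomputable section

namespace Walsh

/-- Lebesgue measure restricted to `[0,1)`. -/
def μI : Measure ℝ := volume.restrict (Set.Ico (0:ℝ) 1)

/-- The `k`-th binary digit `x_k` of `x ∈ [0,1)`, using the expansion terminating
in `0`'s for dyadic rationals. -/
def digit (k : ℕ) (x : ℝ) : ℕ := (⌊x * 2 ^ (k + 1)⌋).toNat % 2

/-- `ε_k(n)`, the `k`-th binary coefficient of `n`. -/
def eps (k n : ℕ) : ℕ := if n.testBit k then 1 else 0

/-- Walsh–Paley function `w_n(x) = (-1)^{Σ_k ε_k(n) x_k}`. -/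
def walsh (n : ℕ) (x : ℝ) : ℝ :=
  (-1 : ℝ) ^ (∑ k ∈ Finset.range (n + 1), eps k n * digit k x)

/-- Walsh–Dirichlet kernel `D_n = Σ_{k=0}^{n-1} w_k`. -/
def D (n : ℕ) (x : ℝ) : ℝ := ∑ k ∈ Finset.range n, walsh k x

/-- Walsh–Fejér kernel `K_n = (1/n) Σ_{k=1}^{n} D_k`. -/
def K (n : ℕ) (x : ℝ) : ℝ := (1 / (n : ℝ)) * ∑ k ∈ Finset.Icc 1 n, D k x

/-- Partial sums `S_M(f) = Σ_{i=0}^{M-1} f̂(i) w_i` of the Walsh–Fourier series. -/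
def S (f : ℝ → ℝ) (M : ℕ) (x : ℝ) : ℝ :=
  ∑ i ∈ Finset.range M, (∫ t in Set.Ico (0:ℝ) 1, f t * walsh i t) * walsh i x

/-- `Q_n = q_0 + ⋯ + q_{n-1}`. -/
def Q (q : ℕ → ℝ) (n : ℕ) : ℝ := ∑ k ∈ Finset.range n, q k

/-- Walsh–Nörlund mean `t_n(f) = (1/Q_n) Σ_{k=1}^n q_{n-k} S_k(f)`. -/
def t (q : ℕ → ℝ) (n : ℕ) (f : ℝ → ℝ) (x : ℝ) : ℝ :=
  (1 / Q q n) * ∑ k ∈ Finset.Icc 1 n, q (n - k) * S f k x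

/-- Walsh–Nörlund kernel `F_n = (1/Q_n) Σ_{k=1}^n q_{n-k} D_k`. -/
def F (q : ℕ → ℝ) (n : ℕ) (x : ℝ) : ℝ :=
  (1 / Q q n) * ∑ k ∈ Finset.Icc 1 n, q (n - k) * D k x

/-- Maximal Nörlund operator `t^*(f) = sup_{n ≥ 1} |t_n(f)|`, valued in `ℝ≥0∞`. -/
def tstar (q : ℕ → ℝ) (f : ℝ → ℝ) (x : ℝ) : ℝ≥0∞ :=
  ⨆ n ∈ Set.Ici 1, ENNReal.ofReal |t q n f x|

/-- `L^p[0,1)` quasinorm (`0 < p ≤ 1`) of a real function, valued in `ℝ≥0∞`. -/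
def LpNorm (p : ℝ) (g : ℝ → ℝ) : ℝ≥0∞ :=
  (∫⁻ x in Set.Ico (0:ℝ) 1, ENNReal.ofReal |g x| ^ p) ^ (1 / p)

/-- `L^p[0,1)` quasinorm of an `ℝ≥0∞`-valued function. -/
def LpNormE (p : ℝ) (g : ℝ → ℝ≥0∞) : ℝ≥0∞ :=
  (∫⁻ x in Set.Ico (0:ℝ) 1, g x ^ p) ^ (1 / p)

/-- `L^∞[0,1)` norm. -/
def LinfNorm (g : ℝ → ℝ) : ℝ≥0∞ := essSup (fun x => ENNReal.ofReal |g x|) μI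

/-- Dyadic maximal function `E^*(f) = sup_m |S_{2^m}(f)|`, valued in `ℝ≥0∞`. -/
def maxS (f : ℝ → ℝ) (x : ℝ) : ℝ≥0∞ := ⨆ m : ℕ, ENNReal.ofReal |S f (2 ^ m) x|

/-- Dyadic Hardy space quasinorm `‖f‖_{H_p} = ‖sup_m |S_{2^m} f|‖_{L^p}`. -/
def HpNorm (p : ℝ) (f : ℝ → ℝ) : ℝ≥0∞ :=
  (∫⁻ x in Set.Ico (0:ℝ) 1, maxS f x ^ p) ^ (1 / p)

/-- Dyadic (logical) addition `x ∔ y = Σ_k |x_k - y_k| 2^{-(k+1)}`. -/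
def dadd (x y : ℝ) : ℝ :=
  ∑' k : ℕ, |(digit k x : ℝ) - (digit k y : ℝ)| * (2 : ℝ)⁻¹ ^ (k + 1)

/-- The dyadic interval `I_N = [0, 2^{-N})`. -/
def IN (N : ℕ) : Set ℝ := Set.Ico (0:ℝ) (1 / 2 ^ N)

/-- `F_{n,1} = (w_n/Q_n) Σ_{j=1}^r Q_{n^{(j-1)}} w_{2^{n_j}} D_{2^{n_j}}`,
the first part of the Nörlund kernel decomposition. The sum over the binary
decomposition `n = 2^{n_1} + ⋯ + 2^{n_r}` is re-indexed over the set bit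
positions `i` of `n`; if `i = n_j` then `n^{(j-1)} = n mod 2^{i+1}`. -/
def F1 (q : ℕ → ℝ) (n : ℕ) (x : ℝ) : ℝ :=
  (walsh n x / Q q n) *
    ∑ i ∈ Finset.range (n + 1),
      if n.testBit i then Q q (n % 2 ^ (i + 1)) * walsh (2 ^ i) x * D (2 ^ i) x else 0

end Walsh

/-!
Fix `j ≤ N` and `x ∈ [2^{-j}, 2^{1-j})`. Some binary digit `x_s` with `s < j` equals `1`, while
`t_s = 0` for `t ∈ I_N`; hence `x ∔ t ≥ 2^{-j}`, and `x ∔ t < 1` for all but one `t`. Since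
`D_{2^i} = ∏_{s<i} (1 + (-1)^{y_s})` vanishes once one of the first `i` digits of `y` is `1` and
is bounded by `2^i`, only the terms `i < j` of `F_{n,1}(x ∔ t)` survive, and
`|F_{n,1}(x ∔ t)| ≤ Q_{2^j} 2^j / Q_n ≤ Q_{2^j} 2^j / Q_{2^N}` for `n > 2^N`. Integrating over
`I_N`, taking the `p`-th power and summing over the shells `j = 1, …, N` gives the estimate
with `c_p = 1`.
-/

lemma lintegral_biUnion_finset_le {α ι : Type*} [MeasurableSpace α] {μ : Measure α}
    (s : Finset ι) (S : ι → Set α) (f : α → ℝ≥0∞) :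
    ∫⁻ x in ⋃ i ∈ s, S i, f x ∂μ ≤ ∑ i ∈ s, ∫⁻ x in S i, f x ∂μ := by
  classical
  induction s using Finset.induction_on with
  | empty => simp
  | insert i s hi ih =>
    rw [Finset.set_biUnion_insert, Finset.sum_insert hi]
    exact (lintegral_union_le _ _ _).trans (add_le_add le_rfl ih)

namespace Walsh

open Finset

section Digits

lemma digit_eq_zero_or_one (k : ℕ) (x : ℝ) : digit k x = 0 ∨ digit k x = 1 :=
  Nat.mod_two_eq_zero_or_one _

lemma floor_mul_two_pow_succ {x : ℝ} (hx : 0 ≤ x) (k : ℕ) :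
    ⌊x * 2 ^ (k + 1)⌋ = 2 * ⌊x * 2 ^ k⌋ + digit k x := by
  have hfloor : 0 ≤ ⌊x * 2 ^ (k + 1)⌋ := Int.floor_nonneg.mpr (by positivity)
  have hdigit : (digit k x : ℤ) = ⌊x * 2 ^ (k + 1)⌋ % 2 := by rw [digit]; omega
  have hlow : 2 * ⌊x * 2 ^ k⌋ ≤ ⌊x * 2 ^ (k + 1)⌋ := by
    rw [Int.le_floor, pow_succ]; push_cast; linarith [Int.floor_le (x * 2 ^ k)]
  have hhigh : ⌊x * 2 ^ (k + 1)⌋ < 2 * ⌊x * 2 ^ k⌋ + 2 := by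
    rw [Int.floor_lt, pow_succ]; push_cast; linarith [Int.lt_floor_add_one (x * 2 ^ k)]
  omega

lemma floor_mul_two_pow_eq_zero {x : ℝ} (hx : x ∈ Set.Ico 0 1) {i : ℕ}
    (h : ∀ s < i, digit s x = 0) : ⌊x * 2 ^ i⌋ = 0 := by
  induction i with
  | zero => simpa [Int.floor_eq_zero_iff] using hx
  | succ i ih =>
    rw [floor_mul_two_pow_succ hx.1, ih fun s hs => h s (by omega), h i (by omega)]
    rfl

lemma exists_digit_eq_one {x : ℝ} (hx1 : x < 1) {i : ℕ} (h : 1 / 2 ^ i ≤ x) :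
    ∃ s < i, digit s x = 1 := by
  by_contra! hne
  have hx0 : 0 ≤ x := le_trans (by positivity) h
  have hzero := floor_mul_two_pow_eq_zero ⟨hx0, hx1⟩ fun s hs =>
    (digit_eq_zero_or_one s x).resolve_right (hne s hs)
  have hlt : x * 2 ^ i < 1 := (Int.floor_eq_zero_iff.mp hzero).2
  rw [div_le_iff₀ (by positivity)] at h
  linarith

lemma digit_eq_zero_of_lt_one_div_two_pow {t : ℝ} {N : ℕ} (ht : t ∈ Set.Ico 0 (1 / 2 ^ N))
    {s : ℕ} (hs : s < N) : digit s t = 0 := by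
  have hlt : t * 2 ^ (s + 1) < 1 :=
    calc t * 2 ^ (s + 1) ≤ t * 2 ^ N :=
          mul_le_mul_of_nonneg_left (pow_le_pow_right₀ one_le_two hs) ht.1
      _ < 1 := by rw [← lt_div_iff₀ (by positivity)]; exact ht.2
  simp [digit, Int.floor_eq_zero_iff.mpr ⟨mul_nonneg ht.1 (by positivity), hlt⟩]

lemma eq_of_digit_eq {t t' : ℝ} (ht : t ∈ Set.Ico 0 1) (ht' : t' ∈ Set.Ico 0 1)
    (h : ∀ k, digit k t = digit k t') : t = t' := by
  have hfloor : ∀ m : ℕ, ⌊t * 2 ^ m⌋ = ⌊t' * 2 ^ m⌋ := by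
    intro m
    induction m with
    | zero => simp [Int.floor_eq_zero_iff.mpr ht, Int.floor_eq_zero_iff.mpr ht']
    | succ m ih => rw [floor_mul_two_pow_succ ht.1, floor_mul_two_pow_succ ht'.1, ih, h m]
  by_contra hne
  obtain ⟨m, hm⟩ := exists_pow_lt_of_lt_one (abs_pos.mpr (sub_ne_zero.mpr hne))
    (by norm_num : (1 / 2 : ℝ) < 1)
  have hclose : |t - t'| * 2 ^ m < 1 := by
    have := Int.abs_sub_lt_one_of_floor_eq_floor (hfloor m)
    rwa [← sub_mul, abs_mul, abs_of_pos (by positivity : (0:ℝ) < 2 ^ m)] at this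
  rw [div_pow, one_pow, div_lt_iff₀ (by positivity)] at hm
  linarith

end Digits

section Kernels

lemma abs_walsh (n : ℕ) (x : ℝ) : |walsh n x| = 1 := by
  simp [walsh]

lemma walsh_eq_prod {n m : ℕ} (hn : n < 2 ^ m) (x : ℝ) :
    walsh n x = ∏ k ∈ range m, (-1 : ℝ) ^ (eps k n * digit k x) := by
  have hstable : ∀ m' M, m' ≤ M → n < 2 ^ m' →
      ∏ k ∈ range m', (-1 : ℝ) ^ (eps k n * digit k x)
        = ∏ k ∈ range M, (-1 : ℝ) ^ (eps k n * digit k x) := fun m' M hM hn' =>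
    prod_subset (range_subset_range.2 hM) fun k _ hk => by
      have : n < 2 ^ k := lt_of_lt_of_le hn' (Nat.pow_le_pow_right two_pos (by simpa using hk))
      simp [eps, Nat.testBit_lt_two_pow this]
  have hn1 : n < 2 ^ (n + 1) :=
    Nat.lt_two_pow_self.trans (Nat.pow_lt_pow_right one_lt_two n.lt_succ_self)
  rw [walsh, ← prod_pow_eq_pow_sum, hstable m (max m (n + 1)) (le_max_left _ _) hn]
  exact hstable _ _ (le_max_right _ _) hn1

lemma walsh_two_pow (i : ℕ) (x : ℝ) : walsh (2 ^ i) x = (-1 : ℝ) ^ digit i x := by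
  rw [walsh_eq_prod (Nat.pow_lt_pow_right one_lt_two i.lt_succ_self) x,
    prod_eq_single_of_mem i (self_mem_range_succ i) fun k _ hk => by
      simp [eps, Ne.symm hk]]
  simp [eps]

lemma walsh_two_pow_add {i k : ℕ} (hk : k < 2 ^ i) (x : ℝ) :
    walsh (2 ^ i + k) x = walsh (2 ^ i) x * walsh k x := by
  have hlt : 2 ^ i + k < 2 ^ (i + 1) := by rw [pow_succ]; omega
  rw [walsh_eq_prod hlt, walsh_eq_prod (Nat.pow_lt_pow_right one_lt_two i.lt_succ_self),
    walsh_eq_prod (hk.trans (Nat.pow_lt_pow_right one_lt_two i.lt_succ_self)), ← prod_mul_distrib]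
  refine prod_congr rfl fun s hs => ?_
  have heps : eps s (2 ^ i + k) = eps s (2 ^ i) + eps s k := by
    rcases (Nat.lt_succ_iff.mp (mem_range.mp hs)).lt_or_eq with hsi | rfl
    · simp [eps, Nat.testBit_two_pow_add_gt hsi, hsi.ne']
    · simp [eps, Nat.testBit_two_pow_add_eq, Nat.testBit_lt_two_pow hk]
  rw [heps, add_mul, pow_add]

lemma D_two_pow (i : ℕ) (x : ℝ) :
    D (2 ^ i) x = ∏ s ∈ range i, (1 + (-1 : ℝ) ^ digit s x) := by
  induction i with
  | zero => simp [D, walsh, eps]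
  | succ i ih =>
    rw [D, pow_succ, mul_two, sum_range_add,
      sum_congr rfl fun k hk => walsh_two_pow_add (mem_range.mp hk) x, ← mul_sum]
    rw [D] at ih
    rw [ih, prod_range_succ, walsh_two_pow]
    ring

lemma D_two_pow_eq_zero {i s : ℕ} (hs : s < i) {x : ℝ} (hx : digit s x = 1) :
    D (2 ^ i) x = 0 := by
  rw [D_two_pow]
  exact prod_eq_zero (mem_range.mpr hs) (by rw [hx]; norm_num)

lemma abs_D_le (n : ℕ) (x : ℝ) : |D n x| ≤ n :=
  (abs_sum_le_sum_abs _ _).trans (by simp [abs_walsh])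

end Kernels

section Q

variable {q : ℕ → ℝ}

lemma Q_nonneg (hq : ∀ k, 0 ≤ q k) (n : ℕ) : 0 ≤ Q q n :=
  sum_nonneg fun k _ => hq k

lemma Q_mono (hq : ∀ k, 0 ≤ q k) : Monotone (Q q) := fun _ _ h =>
  sum_le_sum_of_subset_of_nonneg (range_subset_range.2 h) fun k _ _ => hq k

lemma Q_pos (hq : ∀ k, 0 ≤ q k) (hq0 : 0 < q 0) {n : ℕ} (hn : 0 < n) : 0 < Q q n :=
  calc 0 < Q q 1 := by simpa [Q] using hq0
    _ ≤ Q q n := Q_mono hq hn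

end Q

section F1

variable {q : ℕ → ℝ}

lemma abs_F1_le_of_digit_eq_one (hq : ∀ k, 0 ≤ q k) (n : ℕ) {y : ℝ} {s : ℕ}
    (hs : digit s y = 1) : |F1 q n y| ≤ Q q (2 ^ (s + 1)) * 2 ^ (s + 1) / Q q n := by
  set C := Q q (2 ^ (s + 1))
  have hterm : ∀ i, |if n.testBit i then Q q (n % 2 ^ (i + 1)) * walsh (2 ^ i) y * D (2 ^ i) y
      else 0| ≤ if i ≤ s then C * 2 ^ i else 0 := by
    intro i
    split_ifs with hbit hi hi
    · rw [abs_mul, abs_mul, abs_walsh, mul_one, abs_of_nonneg (Q_nonneg hq _)]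
      refine mul_le_mul ?_ (by simpa using abs_D_le (2 ^ i) y) (abs_nonneg _) (Q_nonneg hq _)
      exact Q_mono hq ((Nat.mod_lt _ (by positivity)).le.trans
        (Nat.pow_le_pow_right two_pos (by omega)))
    · simp [D_two_pow_eq_zero (not_le.mp hi) hs]
    · rw [abs_zero]; exact mul_nonneg (Q_nonneg hq _) (by positivity)
    · simp
  have hsum : |∑ i ∈ range (n + 1), if n.testBit i then
      Q q (n % 2 ^ (i + 1)) * walsh (2 ^ i) y * D (2 ^ i) y else 0| ≤ C * 2 ^ (s + 1) :=
    calc _ ≤ ∑ i ∈ range (n + 1), if i ≤ s then C * 2 ^ i else 0 :=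
          (abs_sum_le_sum_abs _ _).trans (sum_le_sum fun i _ => hterm i)
      _ = ∑ i ∈ range (n + 1) with i ≤ s, C * 2 ^ i := (sum_filter _ _).symm
      _ ≤ ∑ i ∈ range (s + 1), C * 2 ^ i :=
          sum_le_sum_of_subset_of_nonneg (fun i hi => by simp at hi ⊢; omega)
            fun i _ _ => mul_nonneg (Q_nonneg hq _) (by positivity)
      _ ≤ C * 2 ^ (s + 1) := by
          rw [← mul_sum]
          gcongr
          · exact Q_nonneg hq _
          · rw [geom_sum_eq (by norm_num)]; norm_num
  rw [F1, abs_mul, abs_div, abs_walsh, abs_of_nonneg (Q_nonneg hq n), one_div_mul_eq_div]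
  exact div_le_div_of_nonneg_right hsum (Q_nonneg hq n)

lemma abs_F1_le_of_one_div_two_pow_le (hq : ∀ k, 0 ≤ q k) (n : ℕ) {y : ℝ} {j : ℕ}
    (hy : 1 / 2 ^ j ≤ y) (hy1 : y < 1) : |F1 q n y| ≤ Q q (2 ^ j) * 2 ^ j / Q q n := by
  obtain ⟨s, hsj, hs⟩ := exists_digit_eq_one hy1 hy
  refine (abs_F1_le_of_digit_eq_one hq n hs).trans
    (div_le_div_of_nonneg_right ?_ (Q_nonneg hq n))
  gcongr
  · exact Q_nonneg hq _
  · exact Q_mono hq (Nat.pow_le_pow_right two_pos hsj)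
  · norm_num
  · exact hsj

end F1

section DyadicAddition

lemma abs_digit_sub_digit_le_one (k : ℕ) (x t : ℝ) : |(digit k x : ℝ) - digit k t| ≤ 1 := by
  rcases digit_eq_zero_or_one k x with h | h <;> rcases digit_eq_zero_or_one k t with h' | h' <;>
    simp [h, h']

lemma dadd_summand_le (x t : ℝ) (k : ℕ) :
    |(digit k x : ℝ) - digit k t| * (2 : ℝ)⁻¹ ^ (k + 1) ≤ (2 : ℝ)⁻¹ ^ (k + 1) :=
  mul_le_of_le_one_left (by positivity) (abs_digit_sub_digit_le_one k x t)

lemma summable_inv_two_pow_succ : Summable fun k : ℕ => (2 : ℝ)⁻¹ ^ (k + 1) :=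
  (summable_nat_add_iff 1).mpr (summable_geometric_of_lt_one (by norm_num) (by norm_num))

lemma summable_dadd (x t : ℝ) :
    Summable fun k : ℕ => |(digit k x : ℝ) - digit k t| * (2 : ℝ)⁻¹ ^ (k + 1) :=
  summable_inv_two_pow_succ.of_nonneg_of_le (fun k => by positivity) (dadd_summand_le x t)

lemma le_dadd (x t : ℝ) (k : ℕ) :
    |(digit k x : ℝ) - digit k t| * (2 : ℝ)⁻¹ ^ (k + 1) ≤ dadd x t :=
  (summable_dadd x t).le_tsum k fun _ _ => by positivity

lemma dadd_lt_one {x t : ℝ} {k : ℕ} (h : digit k x = digit k t) : dadd x t < 1 := by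
  have hgeom : ∑' k : ℕ, (2 : ℝ)⁻¹ ^ (k + 1) = 1 := by
    simp only [pow_succ', tsum_mul_left, tsum_geometric_inv_two]; norm_num
  rw [← hgeom]
  exact Summable.tsum_lt_tsum (i := k) (dadd_summand_le x t) (by simp [h]) (summable_dadd x t)
    summable_inv_two_pow_succ

lemma subsingleton_one_le_dadd (x : ℝ) :
    {t ∈ Set.Ico (0:ℝ) 1 | 1 ≤ dadd x t}.Subsingleton := by
  rintro t ⟨ht, htx⟩ t' ⟨ht', ht'x⟩
  refine eq_of_digit_eq ht ht' fun k => ?_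
  have hk : digit k x ≠ digit k t := fun h => (dadd_lt_one h).not_ge htx
  have hk' : digit k x ≠ digit k t' := fun h => (dadd_lt_one h).not_ge ht'x
  rcases digit_eq_zero_or_one k x with h | h <;> rcases digit_eq_zero_or_one k t with h1 | h1 <;>
    rcases digit_eq_zero_or_one k t' with h2 | h2 <;> omega

end DyadicAddition

section Locality

variable {q : ℕ → ℝ}

lemma integral_abs_F1_dadd_le (hq : ∀ k, 0 ≤ q k) (n : ℕ) {N j : ℕ} (hjN : j ≤ N)
    {x : ℝ} (hx : 1 / 2 ^ j ≤ x) (hx1 : x < 1) :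
    ∫ t in IN N, |F1 q n (dadd x t)| ≤ Q q (2 ^ j) * 2 ^ j / Q q n * (1 / 2 ^ N) := by
  obtain ⟨s, hsj, hs⟩ := exists_digit_eq_one hx1 hx
  have hIN : IN N ⊆ Set.Ico 0 1 := Set.Ico_subset_Ico_right (by
    rw [div_le_one (by positivity)]; exact one_le_pow₀ one_le_two)
  have hbound : ∀ t ∈ IN N, dadd x t < 1 →
      ‖|F1 q n (dadd x t)|‖ ≤ Q q (2 ^ j) * 2 ^ j / Q q n := by
    intro t ht hlt
    have hst : digit s t = 0 := digit_eq_zero_of_lt_one_div_two_pow ht (hsj.trans_le hjN)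
    have hlow : 1 / 2 ^ j ≤ dadd x t :=
      calc 1 / 2 ^ j ≤ 1 / 2 ^ (s + 1) :=
            one_div_le_one_div_of_le (by positivity) (pow_le_pow_right₀ one_le_two hsj)
        _ ≤ dadd x t := by simpa [hs, hst] using le_dadd x t s
    rw [Real.norm_eq_abs, abs_abs]
    exact abs_F1_le_of_one_div_two_pow_le hq n hlow hlt
  have hnull : ∀ᵐ t, t ∉ {t ∈ Set.Ico (0:ℝ) 1 | 1 ≤ dadd x t} :=
    measure_eq_zero_iff_ae_notMem.mp ((subsingleton_one_le_dadd x).measure_zero _)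
  have hvol : volume.real (IN N) = 1 / 2 ^ N := by
    rw [measureReal_def, IN, Real.volume_Ico, sub_zero, ENNReal.toReal_ofReal (by positivity)]
  have hfin : volume (IN N) < ∞ := measure_Ico_lt_top
  calc ∫ t in IN N, |F1 q n (dadd x t)|
      ≤ ‖∫ t in IN N, |F1 q n (dadd x t)|‖ := Real.le_norm_self _
    _ ≤ Q q (2 ^ j) * 2 ^ j / Q q n * volume.real (IN N) := by
        refine norm_setIntegral_le_of_norm_le_const_ae' hfin ?_
        filter_upwards [hnull] with t ht htN
        exact hbound t htN (not_le.mp fun h => ht ⟨hIN htN, h⟩)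
    _ = Q q (2 ^ j) * 2 ^ j / Q q n * (1 / 2 ^ N) := by rw [hvol]

lemma Ico_diff_IN_subset_biUnion (N : ℕ) :
    Set.Ico (0:ℝ) 1 \ IN N ⊆ ⋃ j ∈ Icc 1 N, Set.Ico (1 / 2 ^ j) (2 / 2 ^ j) := by
  induction N with
  | zero => simp [IN]
  | succ N ih =>
    rintro x ⟨hx, hxN⟩
    by_cases hxN' : x ∈ IN N
    · refine Set.mem_biUnion (x := N + 1) (by simp) ⟨?_, ?_⟩
      · simpa [IN, hx.1] using hxN
      · rw [show (2:ℝ) / 2 ^ (N + 1) = 1 / 2 ^ N by rw [pow_succ]; field_simp]; exact hxN'.2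
    · obtain ⟨j, hj, hxj⟩ := Set.mem_iUnion₂.mp (ih ⟨hx, hxN'⟩)
      exact Set.mem_biUnion (by simp at hj ⊢; omega) hxj

def localMaxF1 (q : ℕ → ℝ) (p : ℝ) (N : ℕ) (x : ℝ) : ℝ≥0∞ :=
  ⨆ n : ℕ, ⨆ _ : 2 ^ N < n,
    ENNReal.ofReal ((2:ℝ) ^ ((N:ℝ) / p) * ∫ t in IN N, |F1 q n (dadd x t)|)

lemma localMaxF1_le (hq : ∀ k, 0 ≤ q k) (hq0 : 0 < q 0) (p : ℝ) {N j : ℕ} (hjN : j ≤ N)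
    {x : ℝ} (hx : x ∈ Set.Ico (1 / 2 ^ j) (2 / 2 ^ j)) (hx1 : x < 1) :
    localMaxF1 q p N x ≤ ENNReal.ofReal
      ((2:ℝ) ^ ((N:ℝ) / p) * (Q q (2 ^ j) * 2 ^ j / Q q (2 ^ N) * (1 / 2 ^ N))) := by
  refine iSup₂_le fun n hn => ENNReal.ofReal_le_ofReal ?_
  gcongr
  refine (integral_abs_F1_dadd_le hq n hjN hx.1 hx1).trans ?_
  gcongr
  · exact mul_nonneg (Q_nonneg hq _) (by positivity)
  · exact Q_pos hq hq0 (by positivity)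
  · exact Q_mono hq hn.le

lemma rpow_two_pow_mul_eq {p : ℝ} (hp : 0 < p) {A B : ℝ} (hA : 0 ≤ A) (hB : 0 < B)
    (N j : ℕ) :
    ((2:ℝ) ^ ((N:ℝ) / p) * (A * 2 ^ j / B * (1 / 2 ^ N))) ^ p * (1 / 2 ^ j)
      = (2:ℝ) ^ ((N:ℝ) * (1 - p)) * B ^ (-p) * (A ^ p * (2:ℝ) ^ ((j:ℝ) * (p - 1))) := by
  have h2 : (0:ℝ) ≤ 2 := zero_le_two
  simp only [← Real.rpow_natCast 2, one_div, ← Real.rpow_neg h2]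
  rw [Real.mul_rpow (by positivity) (by positivity), Real.mul_rpow (by positivity) (by positivity),
    Real.div_rpow (by positivity) hB.le, Real.mul_rpow hA (by positivity), ← Real.rpow_mul h2,
    ← Real.rpow_mul h2, ← Real.rpow_mul h2, div_mul_cancel₀ _ hp.ne', Real.rpow_neg hB.le,
    show (N:ℝ) * (1 - p) = N + -(N * p) by ring, show (j:ℝ) * (p - 1) = j * p + -j by ring,
    Real.rpow_add two_pos, Real.rpow_add two_pos]
  field_simp

lemma setLIntegral_localMaxF1_rpow_le (hq : ∀ k, 0 ≤ q k) (hq0 : 0 < q 0) {p : ℝ} (hp : 0 < p)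
    {N j : ℕ} (hj : 1 ≤ j) (hjN : j ≤ N) :
    ∫⁻ x in Set.Ico (1 / 2 ^ j) (2 / 2 ^ j), localMaxF1 q p N x ^ p ≤
      ENNReal.ofReal ((2:ℝ) ^ ((N:ℝ) * (1 - p)) * Q q (2 ^ N) ^ (-p) *
        (Q q (2 ^ j) ^ p * (2:ℝ) ^ ((j:ℝ) * (p - 1)))) := by
  set a := (2:ℝ) ^ ((N:ℝ) / p) * (Q q (2 ^ j) * 2 ^ j / Q q (2 ^ N) * (1 / 2 ^ N))
  have hQj : 0 ≤ Q q (2 ^ j) := Q_nonneg hq _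
  have hQN : 0 < Q q (2 ^ N) := Q_pos hq hq0 (by positivity)
  have hshell_lt_one : ∀ x ∈ Set.Ico (1 / 2 ^ j : ℝ) (2 / 2 ^ j), x < 1 := fun x hx =>
    hx.2.trans_le ((div_le_one (by positivity)).mpr
      (by simpa using pow_le_pow_right₀ one_le_two hj))
  calc ∫⁻ x in Set.Ico (1 / 2 ^ j) (2 / 2 ^ j), localMaxF1 q p N x ^ p
      ≤ ∫⁻ _ in Set.Ico (1 / 2 ^ j : ℝ) (2 / 2 ^ j), ENNReal.ofReal a ^ p :=
        setLIntegral_mono' measurableSet_Ico fun x hx =>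
          ENNReal.rpow_le_rpow (localMaxF1_le hq hq0 p hjN hx (hshell_lt_one x hx)) hp.le
    _ = ENNReal.ofReal (a ^ p * (1 / 2 ^ j)) := by
        rw [setLIntegral_const, Real.volume_Ico,
          ENNReal.ofReal_rpow_of_nonneg (by positivity) hp.le,
          ← ENNReal.ofReal_mul (by positivity)]
        ring_nf
    _ = _ := by rw [rpow_two_pow_mul_eq hp hQj hQN]

end Locality

end Walsh

theorem F1_quasi_locality_general
    (q : ℕ → ℝ) (hq_pos : ∀ k, 0 < q k)
    (p : ℝ) (hp1 : 0 < p) :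
    ∃ c : ℝ, ∀ N : ℕ,
      (∫⁻ x in Set.Ico (0:ℝ) 1 \ Walsh.IN N,
          (⨆ n : ℕ, ⨆ _ : 2 ^ N < n,
            ENNReal.ofReal ((2:ℝ) ^ ((N:ℝ) / p) *
              ∫ t in Walsh.IN N, |Walsh.F1 q n (Walsh.dadd x t)|)) ^ p)
        ≤ ENNReal.ofReal (c * (2:ℝ) ^ ((N:ℝ) * (1 - p)) * (Walsh.Q q (2 ^ N)) ^ (-p) *
            ∑ j ∈ Finset.Icc 1 N, (Walsh.Q q (2 ^ j)) ^ p * (2:ℝ) ^ ((j:ℝ) * (p - 1))) := by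
  refine ⟨1, fun N => ?_⟩
  have hq : ∀ k, 0 ≤ q k := fun k => (hq_pos k).le
  have hQ := Walsh.Q_nonneg hq
  calc ∫⁻ x in Set.Ico (0:ℝ) 1 \ Walsh.IN N, Walsh.localMaxF1 q p N x ^ p
      ≤ ∫⁻ x in ⋃ j ∈ Finset.Icc 1 N, Set.Ico (1 / 2 ^ j : ℝ) (2 / 2 ^ j),
          Walsh.localMaxF1 q p N x ^ p :=
        lintegral_mono_set (Walsh.Ico_diff_IN_subset_biUnion N)
    _ ≤ ∑ j ∈ Finset.Icc 1 N, ∫⁻ x in Set.Ico (1 / 2 ^ j : ℝ) (2 / 2 ^ j),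
          Walsh.localMaxF1 q p N x ^ p :=
        lintegral_biUnion_finset_le _ _ _
    _ ≤ ∑ j ∈ Finset.Icc 1 N, ENNReal.ofReal ((2:ℝ) ^ ((N:ℝ) * (1 - p)) *
          Walsh.Q q (2 ^ N) ^ (-p) * (Walsh.Q q (2 ^ j) ^ p * (2:ℝ) ^ ((j:ℝ) * (p - 1)))) :=
        Finset.sum_le_sum fun j hj =>
          Walsh.setLIntegral_localMaxF1_rpow_le hq (hq_pos 0) hp1 (Finset.mem_Icc.mp hj).1
            (Finset.mem_Icc.mp hj).2
    _ = _ := by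
        rw [one_mul, Finset.mul_sum,
          ENNReal.ofReal_sum_of_nonneg fun j _ => by
            have := hQ (2 ^ j); have := hQ (2 ^ N); positivity]

/-- quasi-locality estimate for the first part `F_{n,1}` of the
Nörlund kernel decomposition. -/
theorem F1_quasi_locality
    (q : ℕ → ℝ) (hq_anti : Antitone q) (hq_pos : ∀ k, 0 < q k)
    (p : ℝ) (hp1 : 0 < p) (hp2 : p ≤ 1) :
    ∃ c : ℝ, ∀ N : ℕ,
      (∫⁻ x in Set.Ico (0:ℝ) 1 \ Walsh.IN N,
          (⨆ n : ℕ, ⨆ _ : 2 ^ N < n,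
            ENNReal.ofReal ((2:ℝ) ^ ((N:ℝ) / p) *
              ∫ t in Walsh.IN N, |Walsh.F1 q n (Walsh.dadd x t)|)) ^ p)
        ≤ ENNReal.ofReal (c * (2:ℝ) ^ ((N:ℝ) * (1 - p)) * (Walsh.Q q (2 ^ N)) ^ (-p) *
            ∑ j ∈ Finset.Icc 1 N, (Walsh.Q q (2 ^ j)) ^ p * (2:ℝ) ^ ((j:ℝ) * (p - 1))) :=
  F1_quasi_locality_general q hq_pos p hp1
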